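/- arXiv:1108.6180 — 3 statements merged into one kernel-verified Lean document; each statement's English description precedes it below -/
import Mathlib

section
/- Let μ ≤ Q be real numbers and let P, R : ℝ → ℝ be continuous on [μ, Q]. Define a sequence of functions A_n : [μ, Q] → ℝ recursively by A_0(Q') = exp(−∫_μ^{Q'} R(t) dt) and A_{n+1}(Q') = ∫_μ^{Q'} A_n(k) · (R(k) − P(k)) · exp(−∫_k^{Q'} R(t) dt) dk. Then for every n and every Q' ∈ [μ, Q], A_n(Q') = exp(−∫_μ^{Q'} R(t) dt) · (1/n!) · (∫_μ^{Q'} (R(t) − P(t)) dt)^n. -/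
/-!
With `F x = ∫ t in μ..x, (R t - P t)`, the Sudakov factors multiply,
`Δ_R(μ|k) Δ_R(k|Q') = Δ_R(μ|Q')`, so by induction the integrand of `A (n + 1) Q'` is
`Δ_R(μ|Q') F(k)^n F'(k) / n!`, and the substitution `u = F k` integrates it to
`Δ_R(μ|Q') F(Q')^(n+1) / (n+1)!`.
-/

open intervalIntegral Real Set

theorem integral_primitive_pow_mul {f : ℝ → ℝ} {a b : ℝ} (hf : ContinuousOn f (uIcc a b))
    (n : ℕ) :
    ∫ x in a..b, (∫ t in a..x, f t) ^ n * f x = (∫ t in a..b, f t) ^ (n + 1) / (n + 1) := by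
  have hderiv : ∀ x ∈ Ioo (min a b) (max a b),
      HasDerivWithinAt (fun x => ∫ t in a..x, f t) (f x) (Ioi x) x := by
    intro x hx
    have hfx : ContinuousOn f (Ioo (min a b) (max a b)) := hf.mono Ioo_subset_Icc_self
    refine (integral_hasDerivAt_right ?_ (hfx.stronglyMeasurableAtFilter isOpen_Ioo x hx)
      (hfx.continuousAt (isOpen_Ioo.mem_nhds hx))).hasDerivWithinAt
    exact (hf.mono (uIcc_subset_uIcc_left (Ioo_subset_Icc_self hx))).intervalIntegrable
  have hsubst := integral_comp_mul_deriv'' (g := fun u => u ^ n)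
    (continuousOn_primitive_interval (hf.integrableOn_compact isCompact_uIcc)) hderiv hf
    (continuousOn_id.pow n)
  simp only [Function.comp_def, integral_same, integral_pow] at hsubst
  rw [hsubst]
  simp

theorem exp_neg_integral_mul_exp_neg_integral {R : ℝ → ℝ} {a b c : ℝ}
    (hab : IntervalIntegrable R MeasureTheory.volume a b)
    (hbc : IntervalIntegrable R MeasureTheory.volume b c) :
    exp (-∫ t in a..b, R t) * exp (-∫ t in b..c, R t) = exp (-∫ t in a..c, R t) := by
  rw [← exp_add, ← neg_add, integral_add_adjacent_intervals hab hbc]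

theorem veto_algorithm_no_emission_density_general (μ Q : ℝ) (P R : ℝ → ℝ)
    (hP : ContinuousOn P (Set.Icc μ Q)) (hR : ContinuousOn R (Set.Icc μ Q))
    (A : ℕ → ℝ → ℝ)
    (hA0 : ∀ Q', A 0 Q' = Real.exp (-∫ t in μ..Q', R t))
    (hAsucc : ∀ n Q', A (n + 1) Q' =
      ∫ k in μ..Q', A n k * (R k - P k) * Real.exp (-∫ t in k..Q', R t)) :
    ∀ n : ℕ, ∀ Q' ∈ Set.Icc μ Q,
      A n Q' = Real.exp (-∫ t in μ..Q', R t) * (1 / (Nat.factorial n) : ℝ) *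
        (∫ t in μ..Q', (R t - P t)) ^ n := by
  intro n
  induction n with
  | zero => simp [hA0]
  | succ n ih =>
    rintro Q' ⟨hμQ', hQ'Q⟩
    have hsub : uIcc μ Q' ⊆ Icc μ Q := by
      rw [uIcc_of_le hμQ']
      exact Icc_subset_Icc_right hQ'Q
    have hRint : ∀ k ∈ uIcc μ Q', ∀ k' ∈ uIcc μ Q', IntervalIntegrable R MeasureTheory.volume k k' :=
      fun k hk k' hk' => ((hR.mono hsub).mono (uIcc_subset_uIcc hk hk')).intervalIntegrable
    calc A (n + 1) Q'
        = ∫ k in μ..Q', exp (-∫ t in μ..Q', R t) * (1 / n.factorial : ℝ) *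
            ((∫ t in μ..k, (R t - P t)) ^ n * (R k - P k)) := by
          rw [hAsucc]
          refine integral_congr fun k hk => ?_
          rw [ih k (hsub hk), ← exp_neg_integral_mul_exp_neg_integral
            (hRint μ left_mem_uIcc k hk) (hRint k hk Q' right_mem_uIcc)]
          ring
      _ = _ := by
          rw [integral_const_mul, integral_primitive_pow_mul (f := fun t => R t - P t) ((hR.sub hP).mono hsub),
            Nat.factorial_succ]
          push_cast
          field_simp

/-- The no-emission (atomic, `q = μ`) part of Theorem 1 of the paper: the density
produced by the Sudakov veto algorithm after exactly `n` rejection steps and a final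
acceptance step is `Δ_R(μ|Q') Δ^{(n)}_{P-R}(μ|Q')`. -/
theorem veto_algorithm_no_emission_density (μ Q : ℝ) (hμQ : μ ≤ Q) (P R : ℝ → ℝ)
    (hP : ContinuousOn P (Set.Icc μ Q)) (hR : ContinuousOn R (Set.Icc μ Q))
    (A : ℕ → ℝ → ℝ)
    (hA0 : ∀ Q', A 0 Q' = Real.exp (-∫ t in μ..Q', R t))
    (hAsucc : ∀ n Q', A (n + 1) Q' =
      ∫ k in μ..Q', A n k * (R k - P k) * Real.exp (-∫ t in k..Q', R t)) :
    ∀ n : ℕ, ∀ Q' ∈ Set.Icc μ Q,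
      A n Q' = Real.exp (-∫ t in μ..Q', R t) * (1 / (Nat.factorial n) : ℝ) *
        (∫ t in μ..Q', (R t - P t)) ^ n :=
  veto_algorithm_no_emission_density_general μ Q P R hP hR A hA0 hAsucc
end

section
/- Let μ < Q be real numbers and let P, R : ℝ → ℝ be continuous on [μ, Q] with 0 ≤ P(t) ≤ R(t) for all t ∈ [μ, Q]. For each n ∈ ℕ define the measure ν_n on ℝ as the sum of the point mass at μ with weight exp(−∫_μ^Q R) · (1/n!) · (∫_μ^Q (R − P))^n and the measure with density q ↦ P(q) · exp(−∫_q^Q R) · (1/n!) · (∫_q^Q (R − P))^n with respect to Lebesgue measure restricted to the interval (μ, Q]. Then the countable sum of measures ∑_{n∈ℕ} ν_n equals the measure given by the point mass at μ with weight exp(−∫_μ^Q P) plus the measure with density q ↦ P(q) · exp(−∫_q^Q P) with respect to Lebesgue measure restricted to (μ, Q]. -/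
/-!
Summed over the number `n` of rejections, the weight of an outcome `q` is the exponential series
`exp(-∫_q^Q R) · ∑ₙ (∫_q^Q (R - P))ⁿ / n! = exp(∫_q^Q (R - P) - ∫_q^Q R) = exp(-∫_q^Q P)`,
both for the atom at the cutoff `q = μ` and for the density at every `q ∈ (μ, Q]`.
Since all weights are nonnegative, the sum commutes with the Dirac mass and with the density.
-/

open intervalIntegral Real MeasureTheory

lemma hasSum_mul_one_div_factorial_mul_pow (a x : ℝ) :
    HasSum (fun n : ℕ => a * (1 / (Nat.factorial n) : ℝ) * x ^ n) (a * exp x) := by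
  rw [exp_eq_exp_ℝ]
  refine ((NormedSpace.expSeries_div_hasSum_exp x).mul_left a).congr_fun fun n => ?_
  ring

lemma tsum_ofReal_mul_one_div_factorial_mul_pow {a x : ℝ} (ha : 0 ≤ a) (hx : 0 ≤ x) :
    ∑' n : ℕ, ENNReal.ofReal (a * (1 / (Nat.factorial n) : ℝ) * x ^ n) =
      ENNReal.ofReal (a * exp x) := by
  have hsum := hasSum_mul_one_div_factorial_mul_pow a x
  rw [← ENNReal.ofReal_tsum_of_nonneg (fun n => by positivity) hsum.summable, hsum.tsum_eq]

lemma tsum_ofReal_veto_weight {P R : ℝ → ℝ} {q Q c : ℝ} (hqQ : q ≤ Q)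
    (hP : IntervalIntegrable P volume q Q) (hR : IntervalIntegrable R volume q Q)
    (hPR : ∀ t ∈ Set.Icc q Q, P t ≤ R t) (hc : 0 ≤ c) :
    ∑' n : ℕ, ENNReal.ofReal (c * exp (-∫ t in q..Q, R t) * (1 / (Nat.factorial n) : ℝ) *
        (∫ t in q..Q, (R t - P t)) ^ n) =
      ENNReal.ofReal (c * exp (-∫ t in q..Q, P t)) := by
  have hRP : 0 ≤ ∫ t in q..Q, (R t - P t) :=
    integral_nonneg hqQ fun t ht => sub_nonneg.2 (hPR t ht)
  rw [tsum_ofReal_mul_one_div_factorial_mul_pow (by positivity) hRP, integral_sub hR hP,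
    mul_assoc, ← exp_add]
  ring_nf

lemma MeasureTheory.Measure.sum_smul_add_withDensity {α ι : Type*} [MeasurableSpace α]
    [Countable ι] (m ν : Measure α) (a : ι → ENNReal) {f : ι → α → ENNReal}
    (hf : ∀ i, AEMeasurable (f i) ν) :
    Measure.sum (fun i => a i • m + ν.withDensity (f i)) =
      (∑' i, a i) • m + ν.withDensity (fun x => ∑' i, f i x) := by
  ext s hs
  simp only [Measure.sum_apply _ hs, Measure.add_apply, Measure.smul_apply, smul_eq_mul,
    withDensity_apply _ hs, ENNReal.tsum_add, ENNReal.tsum_mul_right]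
  rw [lintegral_tsum fun i => (hf i).restrict]

lemma ContinuousOn.intervalIntegral_left {f : ℝ → ℝ} {a b : ℝ} (hab : a ≤ b)
    (hf : ContinuousOn f (Set.Icc a b)) :
    ContinuousOn (fun q => ∫ t in q..b, f t) (Set.Icc a b) := by
  have hint : IntegrableOn f (Set.uIcc a b) := by
    rw [Set.uIcc_of_le hab]
    exact hf.integrableOn_Icc
  simpa only [Set.uIcc_of_le hab] using continuousOn_primitive_interval_left hint

/-- Overall correctness of the Sudakov veto algorithm: the sum over the number `n` of
rejection steps of the laws `dS_veto^(n)(μ, q|Q)` equals the target Sudakov law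
`dS_P(μ, q|Q) = Δ_P(μ|Q) δ(q-μ) + θ(Q-q)θ(q-μ) P(q) Δ_P(q|Q) dq`. -/
theorem veto_algorithm_law (μ Q : ℝ) (hμQ : μ < Q) (P R : ℝ → ℝ)
    (hP : ContinuousOn P (Set.Icc μ Q)) (hR : ContinuousOn R (Set.Icc μ Q))
    (hPR : ∀ t ∈ Set.Icc μ Q, 0 ≤ P t ∧ P t ≤ R t)
    (ν : ℕ → Measure ℝ)
    (hν : ∀ n : ℕ, ν n =
      (ENNReal.ofReal (Real.exp (-∫ t in μ..Q, R t) * (1 / (Nat.factorial n) : ℝ) *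
          (∫ t in μ..Q, (R t - P t)) ^ n)) • Measure.dirac μ +
        (volume.restrict (Set.Ioc μ Q)).withDensity
          (fun q => ENNReal.ofReal
            (P q * Real.exp (-∫ t in q..Q, R t) * (1 / (Nat.factorial n) : ℝ) *
              (∫ t in q..Q, (R t - P t)) ^ n))) :
    Measure.sum ν =
      (ENNReal.ofReal (Real.exp (-∫ t in μ..Q, P t))) • Measure.dirac μ +
        (volume.restrict (Set.Ioc μ Q)).withDensity
          (fun q => ENNReal.ofReal (P q * Real.exp (-∫ t in q..Q, P t))) := by
  have hle : μ ≤ Q := hμQ.le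
  have hIoc : Set.Ioc μ Q ⊆ Set.Icc μ Q := Set.Ioc_subset_Icc_self
  have hsub : ∀ q ∈ Set.Icc μ Q, Set.Icc q Q ⊆ Set.Icc μ Q := fun q hq =>
    Set.Icc_subset_Icc_left hq.1
  have hweight : ∀ q ∈ Set.Icc μ Q, ∀ c : ℝ, 0 ≤ c →
      ∑' n : ℕ, ENNReal.ofReal (c * exp (-∫ t in q..Q, R t) * (1 / (Nat.factorial n) : ℝ) *
          (∫ t in q..Q, (R t - P t)) ^ n) =
        ENNReal.ofReal (c * exp (-∫ t in q..Q, P t)) := fun q hq c hc =>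
    tsum_ofReal_veto_weight hq.2 ((hP.mono (hsub q hq)).intervalIntegrable_of_Icc hq.2)
      ((hR.mono (hsub q hq)).intervalIntegrable_of_Icc hq.2)
      (fun t ht => (hPR t (hsub q hq ht)).2) hc
  have hdensity (n : ℕ) : ContinuousOn (fun q => ENNReal.ofReal
      (P q * exp (-∫ t in q..Q, R t) * (1 / (Nat.factorial n) : ℝ) *
        (∫ t in q..Q, (R t - P t)) ^ n)) (Set.Icc μ Q) :=
    ENNReal.continuous_ofReal.comp_continuousOn <|
      ((hP.mul (continuous_exp.comp_continuousOn (hR.intervalIntegral_left hle).neg)).mul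
        continuousOn_const).mul (((hR.sub hP).intervalIntegral_left hle).pow n)
  rw [funext hν, Measure.sum_smul_add_withDensity _ _ _ fun n =>
    ((hdensity n).mono hIoc).aemeasurable measurableSet_Ioc]
  congr 1
  · have hatom := hweight μ (Set.left_mem_Icc.2 hle) 1 zero_le_one
    simp only [one_mul] at hatom
    rw [hatom]
  · refine withDensity_congr_ae (ae_restrict_of_forall_mem measurableSet_Ioc fun q hq => ?_)
    exact hweight q (hIoc hq) (P q) (hPR q (hIoc hq)).1
end

section
/- Let μ ≤ q ≤ Q be real numbers, and for i = 1, …, n let P_i : ℝ → ℝ be continuous on [μ, Q]. Set P(t) = ∑_i P_i(t), P⁺(t) = ∑_i max(P_i(t), 0), and P⁻(t) = ∑_i max(−P_i(t), 0). Then the series over m ∈ ℕ of (P⁺(q) − P⁻(q)) · exp(−∫_q^Q P⁺(t) dt) · (1/m!) · (∫_q^Q P⁻(t) dt)^m converges, with sum equal to P(q) · exp(−∫_q^Q P(t) dt). -/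
open intervalIntegral Real

/-!
Pointwise `P = P⁺ - P⁻`, so `Δ_P(q|Q) = Δ_{P⁺}(q|Q) · exp (∫_q^Q P⁻)`. Expanding the last factor in
its exponential series splits the target density according to the number of vetoes.
-/

theorem Finset.sum_max_zero_sub_sum_max_neg_zero {ι α : Type*} [AddCommGroup α] [LinearOrder α]
    [IsOrderedAddMonoid α] (s : Finset ι) (f : ι → α) :
    ∑ i ∈ s, max (f i) 0 - ∑ i ∈ s, max (-f i) 0 = ∑ i ∈ s, f i := by
  rw [← Finset.sum_sub_distrib]
  exact Finset.sum_congr rfl fun i _ => max_zero_sub_max_neg_zero_eq_self (f i)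

theorem Real.hasSum_pow_div_factorial (x : ℝ) :
    HasSum (fun m : ℕ => x ^ m / (m.factorial : ℝ)) (exp x) := by
  rw [exp_eq_exp_ℝ]
  exact NormedSpace.expSeries_div_hasSum_exp x

theorem hasSum_mul_exp_neg_mul_pow_div_factorial (c A x : ℝ) :
    HasSum (fun m : ℕ => c * exp (-A) * (1 / (m.factorial : ℝ)) * x ^ m) (c * exp (-(A - x))) := by
  rw [sub_eq_add_neg, neg_add, neg_neg, exp_add, ← mul_assoc]
  exact ((hasSum_pow_div_factorial x).mul_left (c * exp (-A))).congr_fun fun m => by ring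

theorem intervalIntegral.integral_sum_max_zero_sub_integral_sum_max_neg_zero {ι : Type*}
    (s : Finset ι) {f : ι → ℝ → ℝ} {a b : ℝ} (hf : ∀ i ∈ s, ContinuousOn (f i) (Set.uIcc a b)) :
    (∫ t in a..b, ∑ i ∈ s, max (f i t) 0) - ∫ t in a..b, ∑ i ∈ s, max (-f i t) 0 =
      ∫ t in a..b, ∑ i ∈ s, f i t := by
  have hpos : ContinuousOn (fun t => ∑ i ∈ s, max (f i t) 0) (Set.uIcc a b) :=
    continuousOn_finsetSum s fun i hi => (hf i hi).sup continuousOn_const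
  have hneg : ContinuousOn (fun t => ∑ i ∈ s, max (-f i t) 0) (Set.uIcc a b) :=
    continuousOn_finsetSum s fun i hi => (hf i hi).neg.sup continuousOn_const
  rw [← integral_sub hpos.intervalIntegrable hneg.intervalIntegrable]
  simp only [Finset.sum_max_zero_sub_sum_max_neg_zero]

/-- Correctness of the interleaved veto/competition algorithm: summing the emission
density at `q` after exactly `m` rejection steps (with overestimate `P⁺ = ∑ i, P i⁺`
and veto weight `P⁻ = ∑ i, P i⁻`) over `m` yields the target density
`P(q) Δ_P(q|Q)` with `P = ∑ i, P i`. -/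
theorem interleaved_veto_competition (μ q Q : ℝ) (hμq : μ ≤ q) (hqQ : q ≤ Q)
    (n : ℕ) (P : Fin n → ℝ → ℝ) (hP : ∀ i, ContinuousOn (P i) (Set.Icc μ Q)) :
    HasSum
      (fun m : ℕ =>
        ((∑ i, max (P i q) 0) - ∑ i, max (-P i q) 0) *
          Real.exp (-∫ t in q..Q, ∑ i, max (P i t) 0) *
          (1 / (Nat.factorial m) : ℝ) * (∫ t in q..Q, ∑ i, max (-P i t) 0) ^ m)
      ((∑ i, P i q) * Real.exp (-∫ t in q..Q, ∑ i, P i t)) := by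
  have hsub : Set.uIcc q Q ⊆ Set.Icc μ Q := by
    rw [Set.uIcc_of_le hqQ]
    exact Set.Icc_subset_Icc_left hμq
  rw [Finset.sum_max_zero_sub_sum_max_neg_zero,
    ← integral_sum_max_zero_sub_integral_sum_max_neg_zero _ fun i _ => (hP i).mono hsub]
  exact hasSum_mul_exp_neg_mul_pow_div_factorial _ _ _
end
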